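/- Let T and T' be the 4-leaf caterpillars T = (x₁, x₃, x₄, x₂) and T' = (x₂, x₃, x₄, x₁). Then d_rSPR(T,T') = 2 while d*_P2V(T,T') = 1; i.e., there exists an ordering σ of {x₁, x₂, x₃, x₄} with d^σ_P2V(T,T') = 1, and no single rSPR move transforms T into T'. -/

import Mathlib

namespace Phylo

/-- A rooted binary tree with leaves labelled by `W`.  A rooted binary
phylogenetic tree (whose root has out-degree one) is represented by the
subtree hanging below the root's unique child; the root edge is implicit. -/
inductive PTree (W : Type) where
  | leaf (x : W)
  | node (l r : PTree W)
  deriving DecidableEq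

namespace PTree

variable {W V : Type}

def leaves : PTree W → List W
  | leaf x => [x]
  | node l r => l.leaves ++ r.leaves

def map (f : W → V) : PTree W → PTree V
  | leaf x => leaf (f x)
  | node l r => node (l.map f) (r.map f)

/-- A tree is a phylogenetic tree when its leaves are bijectively labelled,
i.e. no label occurs twice. -/
def IsPhylo (t : PTree W) : Prop := t.leaves.Nodup

def labelSet [DecidableEq W] (t : PTree W) : Finset W := t.leaves.toFinset

end PTree

open PTree

/-- An ordering on the label set of `t`: a bijection from the leaf labels
onto `{1, …, n}`. -/
def IsOrd [DecidableEq W] (t : PTree W) (σ : W → ℕ) : Prop :=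
  Set.BijOn σ ↑t.labelSet (Set.Icc 1 t.leaves.length)

/-! ### Basic operations on trees with natural-number (rank) labels -/

def minLeaf : PTree ℕ → ℕ
  | .leaf x => x
  | .node l r => min (minLeaf l) (minLeaf r)

/-- Restriction of a tree to the leaves satisfying `p` (suppressing vertices
of out-degree one); `none` if no leaf survives. -/
def restrict {W : Type} (p : W → Bool) : PTree W → Option (PTree W)
  | .leaf x => if p x then some (.leaf x) else none
  | .node l r =>
    match restrict p l, restrict p r with
    | some a, some b => some (.node a b)
    | some a, none => some a
    | none, some b => some b
    | none, none => none

/-- The sibling subtree of the leaf labelled `i` (the other child of its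
parent), if the leaf occurs. -/
def sibling {W : Type} [DecidableEq W] (i : W) : PTree W → Option (PTree W)
  | .leaf _ => none
  | .node l r =>
    if l = .leaf i then some r
    else if r = .leaf i then some l
    else match sibling i l with
      | some s => some s
      | none => sibling i r

/-- Hamming distance between two (equal-length) vectors. -/
def hamming {α : Type} [DecidableEq α] (u v : List α) : ℕ :=
  (u.zip v).countP fun p => decide (p.1 ≠ p.2)

/-! ### OLA -/

/-- The OLA label of a vertex, given as the root of its subtree (inside a tree
whose leaves are labelled by ranks):  a leaf is labelled by its rank, and the
internal vertex created when the `j`-th leaf was attached is labelled `-j`;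
this creation step equals the larger of the two minimal leaf ranks below. -/
def olaLabel : PTree ℕ → ℤ
  | .leaf x => (x : ℤ)
  | .node l r => -(max (minLeaf l) (minLeaf r) : ℤ)

/-- The `i`-th coordinate (for `i ≥ 3`) of the OLA vector:  the OLA label of
the sibling of the rank-`i` leaf in the restriction of `t` to ranks `≤ i`. -/
def olaCoord (t : PTree ℕ) (i : ℕ) : ℤ :=
  match restrict (fun x => decide (x ≤ i)) t with
  | some ti =>
    match sibling i ti with
    | some s => olaLabel s
    | none => 0
  | none => 0

/-- The OLA vector of a tree whose leaves are labelled by ranks `1, …, n`. -/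
def olaVec (t : PTree ℕ) : List ℤ :=
  (List.range t.leaves.length).map fun j =>
    if j = 0 then 0 else if j = 1 then 1 else olaCoord t (j + 1)

/-- The OLA distance of `t, t'` with respect to the ordering `σ`. -/
def dOLA {W : Type} (σ : W → ℕ) (t t' : PTree W) : ℕ :=
  hamming (olaVec (t.map σ)) (olaVec (t'.map σ))

/-- The OLA measure: minimum OLA distance over all orderings. -/
noncomputable def dOLAstar {W : Type} [DecidableEq W] (t t' : PTree W) : ℕ :=
  sInf {k | ∃ σ : W → ℕ, IsOrd t σ ∧ dOLA σ t t' = k}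

end Phylo
/-! ### HOP -/

namespace Phylo
open PTree

/-- The HOP labels of the internal vertices on the path from the root of `t`
down to the leaf of rank `i` (the internal HOP label of a vertex with children
`l, r` is `max (minLeaf l) (minLeaf r)`). -/
def pathLabels (i : ℕ) : PTree ℕ → List ℕ
  | .leaf _ => []
  | .node l r =>
    if i ∈ l.leaves then max (minLeaf l) (minLeaf r) :: pathLabels i l
    else if i ∈ r.leaves then max (minLeaf l) (minLeaf r) :: pathLabels i r
    else []

/-- The `i`-th path segment `v(P_i)` of the HOP vector of `t`:  the internal
labels strictly between the internal vertex labelled `i` and the leaf of rank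
`i` (for `i = 1` the vertex labelled `1` is the root `ρ`). -/
def hopSeg (t : PTree ℕ) (i : ℕ) : List ℕ :=
  if i = 1 then 1 :: pathLabels 1 t
  else ((pathLabels i t).dropWhile fun a => decide (a ≠ i)).drop 1

/-- Length of a longest common subsequence of two lists. -/
def lcsLen : List ℕ → List ℕ → ℕ
  | [], _ => 0
  | _ :: _, [] => 0
  | a :: u, b :: v =>
    if a = b then lcsLen u v + 1
    else max (lcsLen (a :: u) v) (lcsLen u (b :: v))
  termination_by u v => u.length + v.length
  decreasing_by all_goals (simp only [List.length_cons]; omega)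

/-- The HOP similarity of `t, t'` with respect to `σ`. -/
def simHOP {W : Type} (σ : W → ℕ) (t t' : PTree W) : ℕ :=
  ∑ i ∈ Finset.range (t.leaves.length - 1),
    lcsLen (hopSeg (t.map σ) (i + 1)) (hopSeg (t'.map σ) (i + 1))

/-- The HOP distance of `t, t'` with respect to `σ`. -/
def dHOP {W : Type} (σ : W → ℕ) (t t' : PTree W) : ℕ :=
  t.leaves.length - simHOP σ t t'

/-- The HOP measure: minimum HOP distance over all orderings. -/
noncomputable def dHOPstar {W : Type} [DecidableEq W] (t t' : PTree W) : ℕ :=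
  sInf {k | ∃ σ : W → ℕ, IsOrd t σ ∧ dHOP σ t t' = k}

end Phylo
/-! ### Phylo2Vec (P2V) -/

namespace Phylo
open PTree

/-- Binary trees with rank-labelled leaves and optionally labelled internal
vertices, used to run the P2V labelling algorithm. -/
inductive LTree where
  | leaf (r : ℕ)
  | node (lbl : Option ℕ) (l r : LTree)
  deriving DecidableEq

namespace LTree

def ofPTree : PTree ℕ → LTree
  | .leaf x => .leaf x
  | .node l r => .node none (ofPTree l) (ofPTree r)

/-- The label of the root of an `LTree` (a leaf is labelled by its rank). -/
def lbl? : LTree → Option ℕ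
  | .leaf r => some r
  | .node lbl _ _ => lbl

/-- The candidate vertices for the next P2V label: unlabelled internal
vertices both of whose children are labelled, together with the larger child
label; a vertex is recorded by its position (a list of booleans). -/
def cands : LTree → List (List Bool × ℕ)
  | .leaf _ => []
  | .node lbl l r =>
    (match lbl, l.lbl?, r.lbl? with
      | none, some a, some b => [(([] : List Bool), max a b)]
      | _, _, _ => []) ++
    (cands l).map (fun p => (false :: p.1, p.2)) ++
    (cands r).map (fun p => (true :: p.1, p.2))

/-- Set the label of the vertex at position `p` to `j`. -/
def setLbl (j : ℕ) : LTree → List Bool → LTree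
  | .leaf r, _ => .leaf r
  | .node _ l r, [] => .node (some j) l r
  | .node lbl l r, false :: p => .node lbl (setLbl j l p) r
  | .node lbl l r, true :: p => .node lbl l (setLbl j r p)

/-- One step of the P2V labelling: give label `j` to the candidate vertex
whose larger child label is maximal. -/
def step (j : ℕ) (t : LTree) : LTree :=
  match List.argmax Prod.snd t.cands with
  | some c => setLbl j t c.1
  | none => t

/-- Run `k` steps of the P2V labelling, starting with label `j`. -/
def run : ℕ → ℕ → LTree → LTree
  | 0, _, t => t
  | k + 1, j, t => run k (j + 1) (step j t)

def siblingL (i : ℕ) : LTree → Option LTree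
  | .leaf _ => none
  | .node _ l r =>
    if l = .leaf i then some r
    else if r = .leaf i then some l
    else match siblingL i l with
      | some s => some s
      | none => siblingL i r

def subAtL : LTree → List Bool → Option LTree
  | t, [] => some t
  | .leaf _, _ :: _ => none
  | .node _ l _, false :: p => subAtL l p
  | .node _ _ r, true :: p => subAtL r p

end LTree

/-- The `i`-th step P2V labelling of the restriction `T_i` of `t` to ranks
`≤ i`:  the internal vertices are labelled `i+1, …, 2i-1`. -/
def p2vLabeled (t : PTree ℕ) (i : ℕ) : Option LTree :=
  (restrict (fun x => decide (x ≤ i)) t).map fun ti =>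
    LTree.run (i - 1) (i + 1) (LTree.ofPTree ti)

/-- The `i`-th coordinate (for `i ≥ 3`) of the P2V vector: the `i`-th step
P2V label of the sibling of the rank-`i` leaf in `T_i`. -/
def p2vCoord (t : PTree ℕ) (i : ℕ) : ℤ :=
  match p2vLabeled t i with
  | some lt =>
    match LTree.siblingL i lt with
    | some s => ((LTree.lbl? s).getD 0 : ℤ)
    | none => 0
  | none => 0

/-- The P2V vector of a tree whose leaves are labelled by ranks `1, …, n`. -/
def p2vVec (t : PTree ℕ) : List ℤ :=
  (List.range t.leaves.length).map fun j =>
    if j = 0 then 0 else if j = 1 then 1 else p2vCoord t (j + 1)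

/-- The P2V distance of `t, t'` with respect to `σ`. -/
def dP2V {W : Type} (σ : W → ℕ) (t t' : PTree W) : ℕ :=
  hamming (p2vVec (t.map σ)) (p2vVec (t'.map σ))

/-- The P2V measure: minimum P2V distance over all orderings. -/
noncomputable def dP2Vstar {W : Type} [DecidableEq W] (t t' : PTree W) : ℕ :=
  sInf {k | ∃ σ : W → ℕ, IsOrd t σ ∧ dP2V σ t t' = k}

end Phylo
/-! ### Isomorphism, positions, and the rSPR distance -/

namespace Phylo
open PTree

/-- Isomorphism of rooted (leaf-labelled) binary trees: the shapes agree up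
to swapping children, and corresponding leaves carry the same label. -/
inductive Iso {W : Type} : PTree W → PTree W → Prop
  | leaf (x : W) : Iso (.leaf x) (.leaf x)
  | node {a b c d : PTree W} : Iso a c → Iso b d → Iso (.node a b) (.node c d)
  | swap {a b c d : PTree W} : Iso a d → Iso b c → Iso (.node a b) (.node c d)

/-- The subtree of `t` at position `p` (a list of booleans: `false` = left
child, `true` = right child). -/
def subAt {W : Type} : PTree W → List Bool → Option (PTree W)
  | t, [] => some t
  | .leaf _, _ :: _ => none
  | .node l _, false :: p => subAt l p
  | .node _ r, true :: p => subAt r p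

/-- Replace the subtree of `t` at position `p` by `s`. -/
def replaceAt {W : Type} : PTree W → List Bool → PTree W → PTree W
  | _, [], s => s
  | .leaf x, _ :: _, _ => .leaf x
  | .node l r, false :: p, s => .node (replaceAt l p s) r
  | .node l r, true :: p, s => .node l (replaceAt r p s)

/-- The position of the leaf labelled `x` in `t`, if it occurs. -/
def leafPos {W : Type} [DecidableEq W] (x : W) : PTree W → Option (List Bool)
  | .leaf y => if y = x then some [] else none
  | .node l r =>
    match leafPos x l with
    | some p => some (false :: p)
    | none => (leafPos x r).map (true :: ·)

/-- The position of the leaf labelled `x` (defaulting to the root). -/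
def pos {W : Type} [DecidableEq W] (t : PTree W) (x : W) : List Bool :=
  (leafPos x t).getD []

/-- One-hole contexts: plugging a tree into a context reconstructs a tree.
Each frame records a sibling subtree and on which side it sits. -/
def plug {W : Type} : List (Bool × PTree W) → PTree W → PTree W
  | [], t => t
  | (false, s) :: c, t => .node (plug c t) s
  | (true, s) :: c, t => .node s (plug c t)

/-- A single rooted subtree prune and regraft (rSPR) move: prune the subtree
`s` (whose parent is an internal vertex of `t`), suppress its parent, and
regraft `s` by subdividing an edge (possibly the root edge) of the remaining
tree. -/
def RSPRMove {W : Type} (t t' : PTree W) : Prop :=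
  ∃ (c₁ : List (Bool × PTree W)) (s r : PTree W),
    (t = plug c₁ (.node s r) ∨ t = plug c₁ (.node r s)) ∧
    ∃ (c₂ : List (Bool × PTree W)) (b : PTree W),
      plug c₁ r = plug c₂ b ∧
      (t' = plug c₂ (.node s b) ∨ t' = plug c₂ (.node b s))

/-- `Reach k t t'`: `t` can be transformed into (a tree isomorphic to) `t'`
by `k` rSPR moves. -/
inductive Reach {W : Type} : ℕ → PTree W → PTree W → Prop
  | refl {t t' : PTree W} : Iso t t' → Reach 0 t t'
  | step {k : ℕ} {t u t' : PTree W} :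
      RSPRMove t u → Reach k u t' → Reach (k + 1) t t'

/-- The rSPR distance. -/
noncomputable def dRSPR {W : Type} (t t' : PTree W) : ℕ :=
  sInf {k | Reach k t t'}

end Phylo
/-! ### Agreement forests and the hybrid number -/

namespace Phylo
open PTree

/-- Longest common prefix of two positions. -/
def lcp : List Bool → List Bool → List Bool
  | a :: u, b :: v => if a = b then a :: lcp u v else []
  | _, _ => []

variable {W : Type} [DecidableEq W]

/-- Restriction of `t` to the labels in the finite set `L`. -/
def restrictF (t : PTree W) (L : Finset W) : Option (PTree W) :=
  restrict (fun x => decide (x ∈ L)) t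

/-- The vertex set (as a set of positions) of the minimal subtree `T(L)` of
`t` connecting the leaves with labels in `L`. -/
def compVerts (t : PTree W) (L : Finset W) : Set (List Bool) :=
  {p | ∃ a ∈ L, ∃ b ∈ L,
    lcp (pos t a) (pos t b) <+: p ∧ (p <+: pos t a ∨ p <+: pos t b)}

/-- The vertex set of the minimal subtree of `t` connecting the leaves with
labels in `L` together with the root `ρ`. -/
def rhoVerts (t : PTree W) (L : Finset W) : Set (List Bool) :=
  {p | ∃ a ∈ L, p <+: pos t a}

/-- The position of the root of the minimal connecting subtree `T(L)`. -/
noncomputable def rootOf (t : PTree W) (L : Finset W) : List Bool :=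
  match L.toList with
  | [] => []
  | a :: rest => rest.foldr (fun b acc => lcp (pos t b) acc) (pos t a)

/-- `Lρ` (the label set of the component containing the root `ρ`, possibly
empty) together with the nonempty label sets in `C` form an agreement forest
for `t` and `t'`. -/
def IsAgreementForest (t t' : PTree W) (Lρ : Finset W) (C : Finset (Finset W)) : Prop :=
  -- the label sets partition the common label set
  (∀ L ∈ C, L.Nonempty) ∧
  (∀ L ∈ C, ∀ L' ∈ C, L ≠ L' → Disjoint L L') ∧
  (∀ L ∈ C, Disjoint Lρ L) ∧
  (∀ x ∈ t.labelSet, x ∈ Lρ ∨ ∃ L ∈ C, x ∈ L) ∧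
  (↑Lρ ⊆ (t.labelSet : Set W)) ∧ (∀ L ∈ C, ↑L ⊆ (t.labelSet : Set W)) ∧
  -- the restrictions of t and t' to each label set are isomorphic
  (∀ L ∈ insert Lρ C,
    ∀ u, restrictF t L = some u → ∃ u', restrictF t' L = some u' ∧ Iso u u') ∧
  -- the minimal connecting subtrees are vertex-disjoint, in t and in t'
  (∀ L ∈ C, ∀ L' ∈ C, L ≠ L' →
    (∀ p ∈ compVerts t L, p ∉ compVerts t L') ∧
    (∀ p ∈ compVerts t' L, p ∉ compVerts t' L')) ∧
  (∀ L ∈ C,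
    (∀ p ∈ rhoVerts t Lρ, p ∉ compVerts t L) ∧
    (∀ p ∈ rhoVerts t' Lρ, p ∉ compVerts t' L))

/-- The ancestor relation between components of an agreement forest: the root
of `T(L)` is a (proper) ancestor of the root of `T(L')` in `t` or in `t'`. -/
def afEdge (t t' : PTree W) (C : Finset (Finset W)) (L L' : Finset W) : Prop :=
  L ∈ C ∧ L' ∈ C ∧ L ≠ L' ∧
  ((rootOf t L <+: rootOf t L' ∧ rootOf t L ≠ rootOf t L') ∨
   (rootOf t' L <+: rootOf t' L' ∧ rootOf t' L ≠ rootOf t' L'))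

/-- An acyclic agreement forest. -/
def IsAcyclicAF (t t' : PTree W) (Lρ : Finset W) (C : Finset (Finset W)) : Prop :=
  IsAgreementForest t t' Lρ C ∧
  ∀ L, ¬ Relation.TransGen (afEdge t t' C) L L

/-- The hybrid number of `t` and `t'`: the minimum number of non-root
components of an acyclic agreement forest (Baroni–Semple–Steel). -/
noncomputable def hyb (t t' : PTree W) : ℕ :=
  sInf {k | ∃ Lρ C, IsAcyclicAF t t' Lρ C ∧ C.card = k}

/-! ### Caterpillars and cherry-picking sequences -/

/-- The caterpillar `(z₁, z₂, z₃, …)`: `z₁, z₂` form a cherry and each later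
leaf is attached above the previous ones. -/
def caterpillar (z₁ z₂ : W) (zs : List W) : PTree W :=
  zs.foldl (fun t z => .node t (.leaf z)) (.node (.leaf z₁) (.leaf z₂))

/-- The cherry partner of the leaf `x` in `t`, if `x` is in a cherry. -/
def cherryPartner (x : W) (t : PTree W) : Option W :=
  match sibling x t with
  | some (.leaf y) => some y
  | _ => none

/-- The restriction of `t` obtained by deleting the first `i` elements of the
sequence `S`. -/
def restAfter (t : PTree W) (S : List W) (i : ℕ) : Option (PTree W) :=
  restrict (fun x => decide (x ∉ S.take i)) t

/-- `S` is a cherry-picking sequence for `t`: every element except the last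
is in a cherry of the restriction of `t` to the not-yet-picked leaves. -/
def IsCPS (t : PTree W) (S : List W) : Prop :=
  ∀ i, i + 1 < S.length →
    ∃ u, restAfter t S i = some u ∧
      ∀ h : i < S.length, ∃ y, cherryPartner (S.get ⟨i, h⟩) u = some y

/-- `S` is a common cherry-picking sequence for `t` and `t'` (in particular
it enumerates the common leaf set). -/
def IsCommonCPS (t t' : PTree W) (S : List W) : Prop :=
  S.Nodup ∧ (∀ x, x ∈ S ↔ x ∈ t.leaves) ∧ IsCPS t S ∧ IsCPS t' S

/-- The weight of a common cherry-picking sequence: the number of positions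
(except the last) at which the cherry partners in the two restrictions
disagree. -/
def wtCPS (t t' : PTree W) (S : List W) : ℕ :=
  (List.range (S.length - 1)).countP fun i =>
    match S[i]?, restAfter t S i, restAfter t' S i with
    | some x, some u, some u' => decide (cherryPartner x u ≠ cherryPartner x u')
    | _, _, _ => false

/-- The ordering on the leaf set induced by the sequence `S`:
`σ (x_i) = n - i + 1` (with `i` one-based). -/
def inducedOrd (S : List W) (x : W) : ℕ :=
  S.length - S.idxOf x

end Phylo
/-! ### Phylogenetic networks, tree-child / temporal networks, display -/

namespace Phylo
open PTree

/-- A finite directed graph with a root and designated leaf vertices, used to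
model rooted binary phylogenetic networks. -/
structure Network (W : Type) where
  V : Type
  [fin : Fintype V]
  [deq : DecidableEq V]
  edge : V → V → Bool
  root : V
  leafOf : W → V

attribute [instance] Network.fin Network.deq

namespace Network

variable {W : Type} [DecidableEq W]

def inDeg (N : Network W) (v : N.V) : ℕ :=
  Fintype.card {u : N.V // N.edge u v = true}

def outDeg (N : Network W) (v : N.V) : ℕ :=
  Fintype.card {u : N.V // N.edge v u = true}

/-- The number of reticulations (in-degree-two vertices). -/
def retCount (N : Network W) : ℕ :=
  Fintype.card {v : N.V // N.inDeg v = 2}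

/-- `N` is a rooted binary phylogenetic network with leaf set `A`. -/
def Wf (N : Network W) (A : Finset W) : Prop :=
  (∀ v : N.V, ¬ Relation.TransGen (fun a b : N.V => N.edge a b = true) v v) ∧
  N.inDeg N.root = 0 ∧ N.outDeg N.root = 1 ∧
  Set.InjOn N.leafOf ↑A ∧
  (∀ x ∈ A, N.inDeg (N.leafOf x) = 1 ∧ N.outDeg (N.leafOf x) = 0) ∧
  (∀ v : N.V, N.outDeg v = 0 → ∃ x ∈ A, v = N.leafOf x) ∧
  (∀ v : N.V, v ≠ N.root → (∀ x ∈ A, v ≠ N.leafOf x) →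
    (N.inDeg v = 1 ∧ N.outDeg v = 2) ∨ (N.inDeg v = 2 ∧ N.outDeg v = 1))

/-- Tree-child: every non-leaf vertex has a child of in-degree one. -/
def TreeChild (N : Network W) : Prop :=
  ∀ v : N.V, N.outDeg v ≠ 0 → ∃ u : N.V, N.edge v u = true ∧ N.inDeg u = 1

/-- Temporal: there is a time map which is constant along reticulation edges
and strictly increasing along tree edges. -/
def Temporal (N : Network W) : Prop :=
  ∃ time : N.V → ℝ, (∀ v, 0 < time v) ∧
    ∀ u v : N.V, N.edge u v = true →
      (N.inDeg v = 2 → time u = time v) ∧ (N.inDeg v = 1 → time u < time v)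

/-- A directed path in `N` from `u` to `v`, with at least one edge. -/
def GoodPath (N : Network W) (l : List N.V) (u v : N.V) : Prop :=
  2 ≤ l.length ∧ l.head? = some u ∧ l.getLast? = some v ∧
    l.Chain' (fun a b => N.edge a b = true)

/-- The interior of a path. -/
def inter {α : Type} (l : List α) : List α := (l.drop 1).dropLast

/-- `N` displays the tree `t`: there is a subtree of `N` which is a
subdivision of `t` (including its root edge).  The vertices of `t` are given
by their positions; edge `e = none` is the root edge and `e = some (p, b)`
the edge from the vertex at `p` to its `b`-child. -/
def Displays (N : Network W) (t : PTree W) : Prop :=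
  ∃ (φ : List Bool → N.V) (P : Option (List Bool × Bool) → List N.V),
    GoodPath N (P none) N.root (φ []) ∧
    (∀ p l r, subAt t p = some (.node l r) →
      GoodPath N (P (some (p, false))) (φ p) (φ (p ++ [false])) ∧
      GoodPath N (P (some (p, true))) (φ p) (φ (p ++ [true]))) ∧
    (∀ x : W, ∀ p, leafPos x t = some p → φ p = N.leafOf x) ∧
    (∀ p q, (subAt t p).isSome → (subAt t q).isSome → φ p = φ q → p = q) ∧
    -- the paths realising distinct tree edges are internally disjoint
    (∀ e e' : Option (List Bool × Bool), e ≠ e' →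
      (∀ pb, e = some pb → ∃ l r, subAt t pb.1 = some (.node l r)) →
      (∀ pb, e' = some pb → ∃ l r, subAt t pb.1 = some (.node l r)) →
      ∀ v ∈ inter (P e), v ∉ P e') ∧
    (∀ e : Option (List Bool × Bool),
      (∀ pb, e = some pb → ∃ l r, subAt t pb.1 = some (.node l r)) →
      ∀ v ∈ inter (P e), ∀ p, (subAt t p).isSome → v ≠ φ p)

end Network

/-- The temporal tree-child hybrid number of `t` and `t'`. -/
noncomputable def hybTemporal (t t' : PTree W) [DecidableEq W] : ℕ :=
  sInf {k | ∃ N : Network W, N.Wf t.labelSet ∧ N.TreeChild ∧ N.Temporal ∧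
    N.Displays t ∧ N.Displays t' ∧ N.retCount = k}

end Phylo
/-! ### Labelled decorations, pendant subtrees, and the reductions -/

namespace Phylo
open PTree

/-- Binary trees in which every vertex carries a label in `α`. -/
inductive DTree (α : Type) where
  | leaf (lbl : α)
  | node (lbl : α) (l r : DTree α)

/-- Label-preserving isomorphism of decorated trees. -/
inductive DIso {α : Type} : DTree α → DTree α → Prop
  | leaf (x : α) : DIso (.leaf x) (.leaf x)
  | node {k : α} {a b c d : DTree α} :
      DIso a c → DIso b d → DIso (.node k a b) (.node k c d)
  | swap {k : α} {a b c d : DTree α} :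
      DIso a d → DIso b c → DIso (.node k a b) (.node k c d)

/-- The HOP labelling of a (rank-labelled) tree: leaves are labelled by their
rank and an internal vertex by the larger of the minimal ranks below its two
children. -/
def hopDec : PTree ℕ → DTree ℕ
  | .leaf x => .leaf x
  | .node l r => .node (max (minLeaf l) (minLeaf r)) (hopDec l) (hopDec r)

/-- The OLA labelling of a (rank-labelled) tree: leaves are labelled by their
rank and an internal vertex by `-j` where `j` is the step at which it was
created (the larger of the minimal ranks below its two children). -/
def olaDec : PTree ℕ → DTree ℤ
  | .leaf x => .leaf (x : ℤ)
  | .node l r => .node (-(max (minLeaf l) (minLeaf r) : ℤ)) (olaDec l) (olaDec r)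

/-- The P2V labelling of the subtree at position `p` of a rank-labelled tree
`t` with `n` leaves (labels read off after the full run of the algorithm). -/
noncomputable def p2vDecAt (t : PTree ℕ) (p : List Bool) : Option (DTree ℕ) :=
  (Option.bind (p2vLabeled t t.leaves.length) (fun lt => LTree.subAtL lt p)).map toD
where
  toD : LTree → DTree ℕ
    | .leaf r => .leaf r
    | .node lbl l r => .node (lbl.getD 0) (toD l) (toD r)

/-- The restriction of a vector to the coordinates whose (one-based) indices
lie in `R` (the coordinates associated with a set of ranks). -/
def restrictVec (v : List ℤ) (R : Finset ℕ) : List ℤ :=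
  (List.range v.length).filterMap fun j =>
    if j + 1 ∈ R then v[j]? else none

variable {W : Type} [DecidableEq W]

/-- `Y` is the label set of a pendant subtree of `t`. -/
def IsPendantSet (t : PTree W) (Y : Finset W) : Prop :=
  ∃ p s, subAt t p = some s ∧ s.labelSet = Y

/-- `Y` carries a common pendant subtree of `t` and `t'`. -/
def IsCommonPendant (t t' : PTree W) (Y : Finset W) : Prop :=
  IsPendantSet t Y ∧ IsPendantSet t' Y ∧
  ∀ u u', restrictF t Y = some u → restrictF t' Y = some u' → Iso u u'

/-- The position of the parent of the leaf labelled `x`. -/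
def parentPos (t : PTree W) (x : W) : List Bool := (pos t x).dropLast

/-- `xs` is a chain of `t`. -/
def IsChain (t : PTree W) (xs : List W) : Prop :=
  3 ≤ xs.length ∧ (∀ x ∈ xs, x ∈ t.leaves) ∧ xs.Nodup ∧
  (∀ (h1 : 0 < xs.length) (h2 : 1 < xs.length),
    parentPos t (xs.get ⟨0, h1⟩) = parentPos t (xs.get ⟨1, h2⟩) ∨
    parentPos t (xs.get ⟨1, h2⟩) = (parentPos t (xs.get ⟨0, h1⟩)).dropLast) ∧
  (∀ i (h : i + 2 < xs.length),
    parentPos t (xs.get ⟨i + 2, h⟩)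
      = (parentPos t (xs.get ⟨i + 1, by omega⟩)).dropLast)

/-- A single application of the subtree reduction, replacing (in both trees)
a maximal common pendant subtree with label set `Y` (with at least two
leaves) by a single new leaf `pnew`. -/
def SubtreeReduction (t t' u u' : PTree W) (Y : Finset W) (pnew : W) : Prop :=
  IsCommonPendant t t' Y ∧ 2 ≤ Y.card ∧
  (∀ Z, IsCommonPendant t t' Z → Y ⊆ Z → Z = Y) ∧
  pnew ∉ t.leaves ∧ pnew ∉ t'.leaves ∧
  (∃ p s, subAt t p = some s ∧ s.labelSet = Y ∧ u = replaceAt t p (.leaf pnew)) ∧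
  (∃ q s', subAt t' q = some s' ∧ s'.labelSet = Y ∧ u' = replaceAt t' q (.leaf pnew))

/-- A single application of the chain reduction, replacing (in both trees) a
maximal common chain `xs` of length at least four by a common chain of length
three on the new labels `c₁, c₂, c₃`. -/
def ChainReduction (t t' u u' : PTree W) (xs : List W) (c₁ c₂ c₃ : W) : Prop :=
  4 ≤ xs.length ∧ IsChain t xs ∧ IsChain t' xs ∧
  (∀ ys, IsChain t ys → IsChain t' ys → xs <:+: ys → ys = xs) ∧
  c₁ ∉ t.leaves ∧ c₂ ∉ t.leaves ∧ c₃ ∉ t.leaves ∧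
  c₁ ≠ c₂ ∧ c₁ ≠ c₃ ∧ c₂ ≠ c₃ ∧
  (∃ u₀ u₀',
    restrict (fun x => decide (x ∉ xs.drop 3)) t = some u₀ ∧
    restrict (fun x => decide (x ∉ xs.drop 3)) t' = some u₀' ∧
    u = u₀.map (chainRen xs c₁ c₂ c₃) ∧ u' = u₀'.map (chainRen xs c₁ c₂ c₃))
where
  chainRen (xs : List W) (c₁ c₂ c₃ : W) (x : W) : W :=
    if xs[0]? = some x then c₁ else if xs[1]? = some x then c₂
    else if xs[2]? = some x then c₃ else x

/-- The elements of `Y` occupy consecutive ranks under `σ`. -/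
def ConsecRanks (σ : W → ℕ) (Y : Finset W) : Prop :=
  ∃ i, Y.image σ = Finset.Ico i (i + Y.card)

end Phylo
/-! ### Polynomial time, NP, and NP-hardness -/

namespace Phylo

/-- Decision problems over binary strings. -/
def Lang : Type := List Bool → Prop

/-- A trivial finite encoding of binary strings. -/
def boolsEnc : Computability.Encoding (List Bool) Bool :=
  ⟨id, some, fun _ => rfl⟩

/-- `f` is computable in polynomial time (by a Turing machine, in the sense
of Mathlib's `Turing.TM2ComputableInPolyTime`). -/
def PolyTimeComputable (f : List Bool → List Bool) : Prop :=
  Nonempty (Turing.TM2ComputableInPolyTime boolsEnc.encode boolsEnc.encode f)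

/-- Polynomial-time many-one reducibility. -/
def Reduces (A B : Lang) : Prop :=
  ∃ f : List Bool → List Bool, PolyTimeComputable f ∧ ∀ x, A x ↔ B (f x)

/-- Pairing of an input with a certificate. -/
def pairEnc (x c : List Bool) : List Bool :=
  (x.flatMap fun b => [true, b]) ++ false :: c

/-- `A` is in NP: membership is certified by certificates of polynomially
bounded length, checkable by a polynomial-time verifier. -/
def InNP (A : Lang) : Prop :=
  ∃ (g : List Bool → List Bool) (q : Polynomial ℕ),
    PolyTimeComputable g ∧
    ∀ x, A x ↔ ∃ c : List Bool,
      c.length ≤ q.eval x.length ∧ g (pairEnc x c) = [true]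

/-- `B` is NP-hard. -/
def NPHard (B : Lang) : Prop := ∀ A, InNP A → Reduces A B

def encNat (k : ℕ) : List Bool := List.replicate k true ++ [false]

def encTree {n : ℕ} : PTree (Fin n) → List Bool
  | .leaf x => false :: encNat x.val
  | .node l r => true :: (encTree l ++ encTree r)

open PTree in
/-- The decision version of computing the HOP measure `d*_HOP`. -/
noncomputable def HOPLang : Lang := fun w =>
  ∃ (n : ℕ) (t t' : PTree (Fin n)) (k : ℕ),
    w = encNat n ++ encTree t ++ encTree t' ++ encNat k ∧
    t.IsPhylo ∧ t'.IsPhylo ∧ t.labelSet = t'.labelSet ∧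
    dHOPstar t t' ≤ k

end Phylo
namespace Phylo
open PTree

/-! The caterpillar `T = ((x₁, x₃), x₄), x₂` becomes `T' = ((x₂, x₃), x₄), x₁` after two rSPR
moves: prune `x₁` and regraft it on the root edge, then prune `x₂` and regraft it on the
pendant edge of `x₃`. Neither zero nor one move suffices, which is a finite check once the
trees reachable from `T` by one move are enumerated. Under the identity ordering the P2V
vectors are `(0, 1, 1, 5)` and `(0, 1, 2, 5)`, and distance `0` is impossible because the
P2V vector of an ordered tree determines the tree; here that is checked over the `24`
orderings of the four leaves. -/

variable {W V : Type}

theorem Iso.refl : ∀ t : PTree W, Iso t t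
  | .leaf x => .leaf x
  | .node l r => .node (Iso.refl l) (Iso.refl r)

def isIso [DecidableEq W] : PTree W → PTree W → Bool
  | .leaf x, .leaf y => x = y
  | .node a b, .node c d => (isIso a c && isIso b d) || (isIso a d && isIso b c)
  | _, _ => false

theorem isIso_iff [DecidableEq W] {t u : PTree W} : isIso t u = true ↔ Iso t u := by
  refine ⟨fun h => ?_, fun h => ?_⟩
  · induction t generalizing u with
    | leaf x =>
      cases u with
      | leaf y =>
        obtain rfl : x = y := by simpa [isIso] using h
        exact .leaf x
      | node => simp [isIso] at h
    | node a b iha ihb =>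
      cases u with
      | leaf => simp [isIso] at h
      | node c d =>
        simp only [isIso, Bool.or_eq_true, Bool.and_eq_true] at h
        rcases h with ⟨hac, hbd⟩ | ⟨had, hbc⟩
        · exact .node (iha hac) (ihb hbd)
        · exact .swap (iha had) (ihb hbc)
  · induction h with
    | leaf x => simp [isIso]
    | node _ _ ih₁ ih₂ => simp [isIso, ih₁, ih₂]
    | swap _ _ ih₁ ih₂ => simp [isIso, ih₁, ih₂]

instance [DecidableEq W] : DecidableRel (Iso : PTree W → PTree W → Prop) :=
  fun _ _ => decidable_of_iff _ isIso_iff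

/-- All ways of writing `t` as `plug c s`. -/
def contexts : PTree W → List (List (Bool × PTree W) × PTree W)
  | .leaf x => [([], .leaf x)]
  | .node l r => ([], .node l r) ::
      ((contexts l).map (fun p => ((false, r) :: p.1, p.2)) ++
       (contexts r).map (fun p => ((true, l) :: p.1, p.2)))

theorem mem_contexts_self : ∀ t : PTree W, ([], t) ∈ contexts t
  | .leaf _ => by simp [contexts]
  | .node _ _ => by simp [contexts]

theorem mem_contexts_plug : ∀ (c : List (Bool × PTree W)) (t : PTree W),
    (c, t) ∈ contexts (plug c t)
  | [], t => mem_contexts_self t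
  | (false, _) :: c, t =>
      List.mem_cons_of_mem _ (List.mem_append_left _
        (List.mem_map.2 ⟨(c, t), mem_contexts_plug c t, rfl⟩))
  | (true, _) :: c, t =>
      List.mem_cons_of_mem _ (List.mem_append_right _
        (List.mem_map.2 ⟨(c, t), mem_contexts_plug c t, rfl⟩))

def regrafts (s t : PTree W) : List (PTree W) :=
  (contexts t).flatMap fun p => [plug p.1 (.node s p.2), plug p.1 (.node p.2 s)]

def rsprMoves (t : PTree W) : List (PTree W) :=
  (contexts t).flatMap fun p =>
    match p.2 with
    | .leaf _ => []
    | .node a b => regrafts a (plug p.1 b) ++ regrafts b (plug p.1 a)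

theorem mem_regrafts {s t u : PTree W} {c : List (Bool × PTree W)} {b : PTree W}
    (ht : t = plug c b) (hu : u = plug c (.node s b) ∨ u = plug c (.node b s)) :
    u ∈ regrafts s t :=
  List.mem_flatMap.2 ⟨(c, b), ht ▸ mem_contexts_plug c b, by rcases hu with rfl | rfl <;> simp⟩

theorem mem_rsprMoves_of_rsprMove {t u : PTree W} (h : RSPRMove t u) : u ∈ rsprMoves t := by
  obtain ⟨c₁, s, r, ht, c₂, b, hcut, hu⟩ := h
  have hreg : u ∈ regrafts s (plug c₁ r) := mem_regrafts hcut hu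
  rcases ht with rfl | rfl
  · exact List.mem_flatMap.2 ⟨(c₁, .node s r), mem_contexts_plug _ _,
      List.mem_append_left _ hreg⟩
  · exact List.mem_flatMap.2 ⟨(c₁, .node r s), mem_contexts_plug _ _,
      List.mem_append_right _ hreg⟩

theorem not_exists_rsprMove_iso {t t' : PTree W} (h : ∀ u ∈ rsprMoves t, ¬ Iso u t') :
    ¬ ∃ u, RSPRMove t u ∧ Iso u t' :=
  fun ⟨u, hmove, hiso⟩ => h u (mem_rsprMoves_of_rsprMove hmove) hiso

theorem two_le_of_reach {k : ℕ} {t t' : PTree W} (h₀ : ¬ Iso t t')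
    (h₁ : ¬ ∃ u, RSPRMove t u ∧ Iso u t') (h : Reach k t t') : 2 ≤ k := by
  cases h with
  | refl hiso => exact absurd hiso h₀
  | step hmove hreach =>
    cases hreach with
    | refl hiso => exact absurd ⟨_, hmove, hiso⟩ h₁
    | step _ _ => omega

theorem dRSPR_eq_two {t t' : PTree W} (h₂ : Reach 2 t t') (h₀ : ¬ Iso t t')
    (h₁ : ¬ ∃ u, RSPRMove t u ∧ Iso u t') : dRSPR t t' = 2 :=
  IsLeast.csInf_eq ⟨h₂, fun _ => two_le_of_reach h₀ h₁⟩

theorem map_caterpillar [DecidableEq W] [DecidableEq V] (f : W → V) (z₁ z₂ : W) (zs : List W) :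
    (caterpillar z₁ z₂ zs).map f = caterpillar (f z₁) (f z₂) (zs.map f) := by
  suffices ∀ t : PTree W, (zs.foldl (fun t z => .node t (.leaf z)) t).map f =
      (zs.map f).foldl (fun t z => .node t (.leaf z)) (t.map f) from this _
  induction zs with
  | nil => exact fun _ => rfl
  | cons z zs ih => exact fun t => ih (.node t (.leaf z))

theorem hamming_p2vVec_caterpillar_ne_zero :
    ∀ a ∈ Finset.Icc 1 4, ∀ c ∈ Finset.Icc 1 4, ∀ d ∈ Finset.Icc 1 4, ∀ b ∈ Finset.Icc 1 4,
      [a, c, d, b].Nodup →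
        hamming (p2vVec (caterpillar a c [d, b])) (p2vVec (caterpillar b c [d, a])) ≠ 0 := by
  decide

theorem dP2V_caterpillar_ne_zero {σ : ℕ → ℕ} (hσ : IsOrd (caterpillar 1 3 [4, 2]) σ) :
    dP2V σ (caterpillar 1 3 [4, 2]) (caterpillar 2 3 [4, 1]) ≠ 0 := by
  have hmem : ∀ x ∈ [1, 3, 4, 2], x ∈ ((caterpillar 1 3 [4, 2]).labelSet : Set ℕ) :=
    fun _ hx => Finset.mem_coe.2 (List.mem_toFinset.2 hx)
  have hrange : ∀ x ∈ [1, 3, 4, 2], σ x ∈ Finset.Icc 1 4 :=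
    fun x hx => Finset.mem_Icc.2 (hσ.mapsTo (hmem x hx))
  have hnodup : ([1, 3, 4, 2].map σ).Nodup :=
    List.Nodup.map_on (fun x hx y hy hxy => hσ.injOn (hmem x hx) (hmem y hy) hxy) (by decide)
  rw [dP2V, map_caterpillar, map_caterpillar]
  exact hamming_p2vVec_caterpillar_ne_zero _ (hrange 1 (by simp)) _ (hrange 3 (by simp))
    _ (hrange 4 (by simp)) _ (hrange 2 (by simp)) hnodup

theorem isOrd_id_caterpillar : IsOrd (caterpillar 1 3 [4, 2]) id := by
  rw [IsOrd, show (caterpillar 1 3 [4, 2]).labelSet = Finset.Icc 1 4 by decide, Finset.coe_Icc]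
  exact Set.bijOn_id _

/-- For the four-leaf caterpillars
`T = (x₁, x₃, x₄, x₂)` and `T' = (x₂, x₃, x₄, x₁)` (with `x_i = i`):
`d_rSPR (T, T') = 2` while `d*_P2V (T, T') = 1`; in particular there is an
ordering `σ` with `d^σ_P2V = 1`, and no single rSPR move transforms `T` into
`T'`. -/
theorem rSPR_two_p2v_one :
    ∀ T T' : PTree ℕ, T = caterpillar 1 3 [4, 2] →
      T' = caterpillar 2 3 [4, 1] →
    dRSPR T T' = 2 ∧ dP2Vstar T T' = 1 ∧
    (∃ σ : ℕ → ℕ, IsOrd T σ ∧ dP2V σ T T' = 1) ∧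
    ¬ ∃ u, RSPRMove T u ∧ Iso u T' := by
  rintro T T' rfl rfl
  have hreach : Reach 2 (caterpillar 1 3 [4, 2]) (caterpillar 2 3 [4, 1]) :=
    .step (u := .node (.node (.node (.leaf 3) (.leaf 4)) (.leaf 2)) (.leaf 1))
      ⟨[(false, .leaf 2), (false, .leaf 4)], .leaf 1, .leaf 3, .inl rfl,
        [], .node (.node (.leaf 3) (.leaf 4)) (.leaf 2), rfl, .inr rfl⟩
      (.step ⟨[(false, .leaf 1)], .leaf 2, .node (.leaf 3) (.leaf 4), .inr rfl,
        [(false, .leaf 1), (false, .leaf 4)], .leaf 3, rfl, .inl rfl⟩ (.refl (Iso.refl _)))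
  have hmove : ¬ ∃ u, RSPRMove (caterpillar 1 3 [4, 2]) u ∧ Iso u (caterpillar 2 3 [4, 1]) :=
    not_exists_rsprMove_iso (by decide)
  have hid : dP2V id (caterpillar 1 3 [4, 2]) (caterpillar 2 3 [4, 1]) = 1 := by decide
  refine ⟨dRSPR_eq_two hreach (by decide) hmove, ?_, ⟨id, isOrd_id_caterpillar, hid⟩, hmove⟩
  exact IsLeast.csInf_eq ⟨⟨id, isOrd_id_caterpillar, hid⟩, fun _ ⟨σ, hσ, hk⟩ =>
    hk ▸ Nat.one_le_iff_ne_zero.2 (dP2V_caterpillar_ne_zero hσ)⟩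

end Phylo
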